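/- Let ⟨G, Eℓ⟩ be a two-player game graph with live edges, Q ⊆ V, and F = {F_1, …, F_s} a family of subsets of V, and let Z̃* := νỸ. ⋂_{b=1}^{s} ν Ỹ_b. μ X̃_b. ( Q ∩ [ (F_b ∩ Cpre(Ỹ)) ∪ Apre(Ỹ_b, X̃_b) ] ). Then for every b ∈ {1, …, s}, the nested fixed point νY. μX. ( Q ∩ [ (F_b ∩ Cpre(Z̃*)) ∪ Apre(Y, X) ] ) equals Z̃*. -/
import Mathlib


/-- Least fixed point of a set transformer (Knaster–Tarski form). -/
def lfpSet {V : Type*} (f : Set V → Set V) : Set V := sInf {X | f X ⊆ X}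

/-- Greatest fixed point of a set transformer (Knaster–Tarski form). -/
def gfpSet {V : Type*} (f : Set V → Set V) : Set V := sSup {X | X ⊆ f X}

/-- A two-player game graph with live edges: vertices are partitioned into
Player-0 vertices `V0` and Player-1 vertices `V1`, every vertex has a successor,
and live edges `El` are Player-1 edges. -/
structure LiveGameGraph (V : Type*) where
  V0 : Set V
  V1 : Set V
  E : V → V → Prop
  El : V → V → Prop
  cover : V0 ∪ V1 = Set.univ
  disj : V0 ∩ V1 = ∅
  succ_nonempty : ∀ v : V, ∃ w, E v w
  live_sub : ∀ v w, El v w → v ∈ V1 ∧ E v w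

namespace LiveGameGraph

variable {V : Type*}

/-- Pre∃0(S) -/
def pre0 (Gm : LiveGameGraph V) (S : Set V) : Set V :=
  {v | v ∈ Gm.V0 ∧ ∃ w, Gm.E v w ∧ w ∈ S}

/-- Pre∀1(S) -/
def pre1 (Gm : LiveGameGraph V) (S : Set V) : Set V :=
  {v | v ∈ Gm.V1 ∧ ∀ w, Gm.E v w → w ∈ S}

/-- Cpre(S) -/
def cpre (Gm : LiveGameGraph V) (S : Set V) : Set V := Gm.pre0 S ∪ Gm.pre1 S

/-- Lpre∃(T) -/
def lpre (Gm : LiveGameGraph V) (T : Set V) : Set V :=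
  {v | ∃ w, Gm.El v w ∧ w ∈ T}

/-- Apre(S,T) -/
def apre (Gm : LiveGameGraph V) (S T : Set V) : Set V :=
  Gm.cpre T ∪ (Gm.lpre T ∩ Gm.pre1 S)

end LiveGameGraph

/- ### Auxiliary fixed-point lemmas -/

section FP
variable {V : Type*}

lemma lfpSet_le {f : Set V → Set V} {S : Set V} (h : f S ⊆ S) : lfpSet f ⊆ S := sInf_le h

lemma lfpSet_prefixed {f : Set V → Set V} (hf : Monotone f) : f (lfpSet f) ⊆ lfpSet f :=
  le_sInf fun X hX => (hf (sInf_le hX)).trans hX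

lemma lfpSet_mono {f g : Set V → Set V} (hg : Monotone g) (h : ∀ X, f X ⊆ g X) :
    lfpSet f ⊆ lfpSet g := lfpSet_le ((h _).trans (lfpSet_prefixed hg))

lemma le_gfpSet {f : Set V → Set V} {S : Set V} (h : S ⊆ f S) : S ⊆ gfpSet f := le_sSup h

lemma gfpSet_postfixed {f : Set V → Set V} (hf : Monotone f) : gfpSet f ⊆ f (gfpSet f) :=
  sSup_le fun X hX => hX.trans (hf (le_sSup hX))

lemma gfpSet_mono {f g : Set V → Set V} (hf : Monotone f) (h : ∀ X, f X ⊆ g X) :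
    gfpSet f ⊆ gfpSet g := le_gfpSet ((gfpSet_postfixed hf).trans (h _))

end FP

/- ### Monotonicity of the predecessor operators -/

namespace LiveGameGraph

variable {V : Type*} (Gm : LiveGameGraph V)

lemma pre0_mono {S T : Set V} (h : S ⊆ T) : Gm.pre0 S ⊆ Gm.pre0 T :=
  fun v hv => ⟨hv.1, hv.2.imp fun w hw => ⟨hw.1, h hw.2⟩⟩

lemma pre1_mono {S T : Set V} (h : S ⊆ T) : Gm.pre1 S ⊆ Gm.pre1 T :=
  fun v hv => ⟨hv.1, fun w hE => h (hv.2 w hE)⟩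

lemma cpre_mono {S T : Set V} (h : S ⊆ T) : Gm.cpre S ⊆ Gm.cpre T :=
  Set.union_subset_union (Gm.pre0_mono h) (Gm.pre1_mono h)

lemma lpre_mono {S T : Set V} (h : S ⊆ T) : Gm.lpre S ⊆ Gm.lpre T :=
  fun v hv => hv.imp fun w hw => ⟨hw.1, h hw.2⟩

lemma apre_mono {S S' T T' : Set V} (hS : S ⊆ S') (hT : T ⊆ T') :
    Gm.apre S T ⊆ Gm.apre S' T' :=
  Set.union_subset_union (Gm.cpre_mono hT)
    (Set.inter_subset_inter (Gm.lpre_mono hT) (Gm.pre1_mono hS))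

lemma cpre_subset_apre (S T : Set V) : Gm.cpre T ⊆ Gm.apre S T :=
  Set.subset_union_left

end LiveGameGraph

/-- for every b, νY.μX.(Q ∩ [(F_b ∩ Cpre(Z̃*)) ∪ Apre(Y,X)]) = Z̃*. -/
theorem gen_buchi_inner_nu_mu_eq {V : Type*} [Fintype V]
    (Gm : LiveGameGraph V) (Q : Set V) (s : ℕ) (F : ℕ → Set V) (Ztstar : Set V)
    (hZ : Ztstar = gfpSet fun Yt => ⋂ b ∈ Finset.Icc 1 s, gfpSet fun Yb =>
      lfpSet fun Xb => Q ∩ ((F b ∩ Gm.cpre Yt) ∪ Gm.apre Yb Xb)) :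
    ∀ b ∈ Finset.Icc 1 s,
      (gfpSet fun Y => lfpSet fun X =>
        Q ∩ ((F b ∩ Gm.cpre Ztstar) ∪ Gm.apre Y X)) = Ztstar := by
  classical
  -- g b Yt : the inner ν μ fixpoint as a function of the outer variable
  set g : ℕ → Set V → Set V := fun b Yt => gfpSet fun Yb =>
    lfpSet fun Xb => Q ∩ ((F b ∩ Gm.cpre Yt) ∪ Gm.apre Yb Xb) with hgdef
  -- the inner μ-map is monotone in its argument
  have monoX : ∀ (b : ℕ) (Yt Yb : Set V),
      Monotone fun X => Q ∩ ((F b ∩ Gm.cpre Yt) ∪ Gm.apre Yb X) := by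
    intro b Yt Yb X X' h
    exact Set.inter_subset_inter subset_rfl
      (Set.union_subset_union subset_rfl (Gm.apre_mono subset_rfl h))
  -- the μ-fixpoint is monotone in the parameters Yt, Yb
  have monoL : ∀ (b : ℕ) {Yt Yt' Yb Yb' : Set V}, Yt ⊆ Yt' → Yb ⊆ Yb' →
      (lfpSet fun X => Q ∩ ((F b ∩ Gm.cpre Yt) ∪ Gm.apre Yb X)) ⊆
      (lfpSet fun X => Q ∩ ((F b ∩ Gm.cpre Yt') ∪ Gm.apre Yb' X)) := by
    intro b Yt Yt' Yb Yb' h1 h2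
    refine lfpSet_mono (monoX b Yt' Yb') fun X => ?_
    exact Set.inter_subset_inter subset_rfl
      (Set.union_subset_union (Set.inter_subset_inter subset_rfl (Gm.cpre_mono h1))
        (Gm.apre_mono h2 subset_rfl))
  -- g b is monotone
  have monog : ∀ b : ℕ, Monotone (g b) := by
    intro b Yt Yt' h
    exact gfpSet_mono (fun Yb Yb' h2 => monoL b subset_rfl h2) (fun Yb => monoL b h subset_rfl)
  -- the outer map Φ is monotone
  have monoPhi : Monotone fun Yt => ⋂ c ∈ Finset.Icc 1 s, g c Yt := by
    intro Yt Yt' h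
    exact Set.iInter₂_mono fun c _ => monog c h
  -- Z̃* is a post-fixed point of Φ
  have hZpost : Ztstar ⊆ ⋂ c ∈ Finset.Icc 1 s, g c Ztstar := by
    conv_lhs => rw [hZ]
    conv_rhs => rw [hZ]
    exact gfpSet_postfixed monoPhi
  have hZle : ∀ c ∈ Finset.Icc 1 s, Ztstar ⊆ g c Ztstar := by
    intro c hc
    exact hZpost.trans (Set.iInter₂_subset c hc)
  -- U : union of all the W_d = g d Z̃*
  set U : Set V := ⋃ d ∈ Finset.Icc 1 s, g d Ztstar with hUdef
  have hWU : ∀ d ∈ Finset.Icc 1 s, g d Ztstar ⊆ U := by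
    intro d hd
    rw [hUdef]
    exact Set.subset_iUnion₂ (s := fun d (_ : d ∈ Finset.Icc 1 s) => g d Ztstar) d hd
  -- each W_d is a post-fixed point of the ν-map, i.e. W_d ⊆ μX. h(Z̃*, W_d, X)
  have hWpost : ∀ d : ℕ, g d Ztstar ⊆
      lfpSet fun X => Q ∩ ((F d ∩ Gm.cpre Ztstar) ∪ Gm.apre (g d Ztstar) X) := by
    intro d
    exact gfpSet_postfixed (fun Yb Yb' h2 => monoL d subset_rfl h2)
  -- the key argument, for any c in the index range
  have hUgc : ∀ c ∈ Finset.Icc 1 s, U ⊆ g c U := by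
    intro c hc
    -- L : μX. Q ∩ ((F_c ∩ Cpre U) ∪ Apre(U, X))
    set L : Set V := lfpSet fun X => Q ∩ ((F c ∩ Gm.cpre U) ∪ Gm.apre U X) with hLdef
    have hLpre : (Q ∩ ((F c ∩ Gm.cpre U) ∪ Gm.apre U L)) ⊆ L := lfpSet_prefixed (monoX c U U)
    -- W_c ⊆ L, hence Z̃* ⊆ L
    have hWcL : g c Ztstar ⊆ L := by
      refine (hWpost c).trans ?_
      exact monoL c ((hZle c hc).trans (hWU c hc)) (hWU c hc)
    have hZL : Ztstar ⊆ L := (hZle c hc).trans hWcL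
    -- every W_b' ⊆ L
    have hWbL : ∀ b' ∈ Finset.Icc 1 s, g b' Ztstar ⊆ L := by
      intro b' hb'
      refine (hWpost b').trans (lfpSet_le ?_)
      refine (Set.inter_subset_inter subset_rfl ?_).trans hLpre
      refine Set.union_subset ?_ ?_
      · refine (Set.inter_subset_right).trans ?_
        refine (Gm.cpre_mono hZL).trans ?_
        exact (Gm.cpre_subset_apre U L).trans Set.subset_union_right
      · exact (Gm.apre_mono (hWU b' hb') subset_rfl).trans Set.subset_union_right
    have hUL : U ⊆ L := by
      rw [hUdef]
      exact Set.iUnion₂_subset hWbL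
    exact le_gfpSet hUL
  -- hence U ⊆ Z̃*
  have hUZ : U ⊆ Ztstar := by
    conv_rhs => rw [hZ]
    exact le_gfpSet (Set.subset_iInter₂ fun c hc => hUgc c hc)
  -- conclude
  intro b hb
  exact subset_antisymm ((hWU b hb).trans hUZ) (hZle b hb)
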